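/- (Subject Reduction for the Bud rule) Suppose I satisfies the CFA closure condition for Bud: whenever bud_n ∈ I(μ,μQ,μP), bud_n⊥(ρ) ∈ I(μp,μ,μQ), μP ∈ I(μp,μ,μQ), and μQ ∈ I(μgp,μp,μ), then μR ∈ I(μgp,μp,μ), A(ρ) ⊆ I(μp,μ,μR), μP ∈ I(μp,μ,μR), I(μ,μQ,μP) ⊆ I(μ,μR,μP), and I(μQ,μP,x) ⊆ I(μR,μP,x) for all x, where μR = MI_bud(bud_n,μP,bud_n⊥(ρ),μQ,μgp,μp,μ). Then if I ⊨^{μgp μp μ} (bud_n⊥(ρ).τ|τ₀)⟨(bud_n.σ|σ₀)⟨P₀⟩^μP ∘ P₁⟩^μQ, it follows that I ⊨^{μgp μp μ} ρ⟨(σ|σ₀)⟨P₀⟩^μP⟩^μR ∘ (τ|τ₀)⟨P₁⟩^μQ. -/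

import Mathlib

/-- Membrane processes of Brane Calculi: σ ::= 0 | σ|τ | !σ | a.σ,
with actions from an abstract type `α`. -/
inductive MProc (α : Type) : Type where
  | zero
  | par (σ τ : MProc α)
  | repl (σ : MProc α)
  | act (a : α) (σ : MProc α)

/-- The action-collecting function A:
A(0)=∅, A(a.σ)={a}∪A(σ), A(!σ)=A(σ), A(σ₀|σ₁)=A(σ₀)∪A(σ₁). -/
def A {α : Type} : MProc α → Set α
  | .zero => ∅
  | .par σ τ => A σ ∪ A τ
  | .repl σ => A σ
  | .act a σ => {a} ∪ A σ

/-- Brane systems with labels from `M`: P ::= ◇ | P∘Q | !P | σ⟨P⟩^μ. -/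
inductive Sys (α M : Type) : Type where
  | void
  | comp (P Q : Sys α M)
  | repl (P : Sys α M)
  | mem (σ : MProc α) (μ : M) (P : Sys α M)

/-- An estimate I(μgp,μp,μ) ⊆ M ∪ Actions. -/
abbrev Estimate (α M : Type) := M → M → M → Set (M ⊕ α)

/-- The CFA judgement I ⊨^{μgp μp μ} P. -/
def Sat {α M : Type} (I : Estimate α M) : M → M → M → Sys α M → Prop
  | _, _, _, .void => True
  | gp, p, m, .comp P Q => Sat I gp p m P ∧ Sat I gp p m Q
  | gp, p, m, .repl P => Sat I gp p m P
  | gp, p, m, .mem σ μs P =>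
      Sum.inl μs ∈ I gp p m ∧ (∀ a ∈ A σ, Sum.inr a ∈ I p m μs) ∧ Sat I p m μs P

/-! The judgement for the redex supplies the four premises of the closure condition, since bud_n
and bud_n⊥(ρ) are actions of the two membranes. Its conclusions place the new membrane μR; the
membranes that lost their prefix only have fewer actions to account for; and P₀, which now sits
under μR instead of μQ, is covered by contextual weakening. -/

theorem mem_A_par_act_self {α : Type} (a : α) (σ σ₀ : MProc α) :
    a ∈ A (.par (.act a σ) σ₀) :=
  Or.inl (Or.inl rfl)

theorem A_par_subset_A_par_act {α : Type} (a : α) (σ σ₀ : MProc α) :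
    A (.par σ σ₀) ⊆ A (.par (.act a σ) σ₀) :=
  Set.union_subset_union_left _ Set.subset_union_right

namespace Sat

variable {α M : Type} {I : Estimate α M}

theorem mono_grandparent {gp gp' p m : M} (h : I gp p m ⊆ I gp' p m) :
    ∀ {P : Sys α M}, Sat I gp p m P → Sat I gp' p m P
  | .void, _ => trivial
  | .comp _ _, ⟨hP, hQ⟩ => ⟨mono_grandparent h hP, mono_grandparent h hQ⟩
  | .repl P, hP => mono_grandparent h (P := P) hP
  | .mem _ _ _, ⟨hμ, hact, hP⟩ => ⟨h hμ, hact, hP⟩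

theorem mono_parent {gp p p' m : M} (hsib : I gp p m ⊆ I gp p' m)
    (hchild : ∀ x, I p m x ⊆ I p' m x) :
    ∀ {P : Sys α M}, Sat I gp p m P → Sat I gp p' m P
  | .void, _ => trivial
  | .comp _ _, ⟨hP, hQ⟩ => ⟨mono_parent hsib hchild hP, mono_parent hsib hchild hQ⟩
  | .repl P, hP => mono_parent hsib hchild (P := P) hP
  | .mem _ μs _, ⟨hμ, hact, hP⟩ =>
      ⟨hsib hμ, fun a ha => hchild μs (hact a ha), mono_grandparent (hchild μs) hP⟩

end Sat

/-- `budA`/`cobudρ` are the actions bud_n and bud_n⊥(ρ) (with parameter ρ);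
`MIbud μP μQ μgp μp μ` is the fresh label μR of the budded membrane. -/
theorem subject_reduction_bud {α M : Type} (I : Estimate α M)
    (MIbud : M → M → M → M → M → M)
    (budA cobudρ : α) (ρ σ σ₀ τ τ₀ : MProc α)
    (μP μQ μgp μp μ : M) (P₀ P₁ : Sys α M)
    (hclosure : ∀ gp p m mP mQ : M,
      Sum.inr budA ∈ I m mQ mP → Sum.inr cobudρ ∈ I p m mQ →
      Sum.inl mP ∈ I p m mQ → Sum.inl mQ ∈ I gp p m →
      Sum.inl (MIbud mP mQ gp p m) ∈ I gp p m ∧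
      (∀ a ∈ A ρ, Sum.inr a ∈ I p m (MIbud mP mQ gp p m)) ∧
      Sum.inl mP ∈ I p m (MIbud mP mQ gp p m) ∧
      I m mQ mP ⊆ I m (MIbud mP mQ gp p m) mP ∧
      (∀ x, I mQ mP x ⊆ I (MIbud mP mQ gp p m) mP x))
    (hsat : Sat I μgp μp μ
      (Sys.mem (MProc.par (MProc.act cobudρ τ) τ₀) μQ
        (Sys.comp (Sys.mem (MProc.par (MProc.act budA σ) σ₀) μP P₀) P₁))) :
    Sat I μgp μp μ
      (Sys.comp (Sys.mem ρ (MIbud μP μQ μgp μp μ) (Sys.mem (MProc.par σ σ₀) μP P₀))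
                (Sys.mem (MProc.par τ τ₀) μQ P₁)) := by
  obtain ⟨hQ, hQact, ⟨hP, hPact, hP₀⟩, hP₁⟩ := hsat
  obtain ⟨hR, hRact, hPR, hsib, hchild⟩ := hclosure μgp μp μ μP μQ
    (hPact _ (mem_A_par_act_self ..)) (hQact _ (mem_A_par_act_self ..)) hP hQ
  exact ⟨⟨hR, hRact, hPR, fun a ha => hsib (hPact a (A_par_subset_A_par_act _ _ _ ha)),
      hP₀.mono_parent hsib hchild⟩,
    hQ, fun a ha => hQact a (A_par_subset_A_par_act _ _ _ ha), hP₁⟩
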